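/- Let P and Q be finite p-groups in CP₂ of the same order p^n. If |Ω_i(P)| = |Ω_i(Q)| for all natural numbers i, then ψ(Ω_i(P)) = ψ(Ω_i(Q)) for all natural numbers i. -/
import Mathlib


/-- Sum of the orders of the elements of a group. -/
noncomputable def psi (G : Type*) [Group G] : ℕ := ∑ᶠ x : G, orderOf x

/-- `Omega p G i` is the subgroup generated by all `x` with `x ^ p ^ i = 1`. -/
def Omega (p : ℕ) (G : Type*) [Group G] (i : ℕ) : Subgroup G :=
  Subgroup.closure {x : G | x ^ p ^ i = 1}

/-- The class `CP₂`: `o(xy) ≤ max (o x) (o y)` for all `x y`. -/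
def CP2 (G : Type*) [Group G] : Prop :=
  ∀ x y : G, orderOf (x * y) ≤ max (orderOf x) (orderOf y)

section aux

open scoped Classical

variable {p : ℕ} {G : Type*} [Group G]

/-- In a `CP₂` p-group, membership in `Omega p G i` is just `x ^ p ^ i = 1`. -/
lemma mem_Omega_iff (hp : p.Prime) (hG : IsPGroup p G) (hcp : CP2 G) (i : ℕ) (x : G) :
    x ∈ Omega p G i ↔ x ^ p ^ i = 1 := by
  have : Fact p.Prime := ⟨hp⟩
  have key : ∀ y : G, orderOf y ≤ p ^ i → y ^ p ^ i = 1 := by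
    intro y hy
    obtain ⟨k, hk⟩ := IsPGroup.iff_orderOf.mp hG y
    rw [← orderOf_dvd_iff_pow_eq_one, hk]
    exact pow_dvd_pow p (by
      have := hk ▸ hy
      exact (Nat.pow_le_pow_iff_right hp.one_lt).mp this)
  constructor
  · intro hx
    let H : Subgroup G :=
      { carrier := {x : G | x ^ p ^ i = 1}
        one_mem' := one_pow _
        mul_mem' := by
          intro a b ha hb
          simp only [Set.mem_setOf_eq] at ha hb ⊢
          apply key
          refine (hcp a b).trans (max_le ?_ ?_)
          · exact Nat.le_of_dvd (pow_pos hp.pos i) (orderOf_dvd_of_pow_eq_one ha)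
          · exact Nat.le_of_dvd (pow_pos hp.pos i) (orderOf_dvd_of_pow_eq_one hb)
        inv_mem' := by
          intro a ha
          simp only [Set.mem_setOf_eq] at ha ⊢
          rw [inv_pow, ha, inv_one] }
    exact (Subgroup.closure_le H).mpr le_rfl hx
  · intro hx
    exact Subgroup.subset_closure hx

variable [Fintype G]

open Finset in
/-- The key counting formula. -/
lemma sum_order_formula (hp : p.Prime) (hG : IsPGroup p G) (i : ℕ) :
    ∑ x ∈ univ.filter (fun x : G => x ^ p ^ i = 1), orderOf x =
      (univ.filter (fun x : G => x ^ p ^ i = 1)).card +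
      ∑ j ∈ range i, (p ^ (j + 1) - p ^ j) *
        ((univ.filter (fun x : G => x ^ p ^ i = 1)).card -
         (univ.filter (fun x : G => x ^ p ^ j = 1)).card) := by
  have : Fact p.Prime := ⟨hp⟩
  have hmono : ∀ j, j ≤ i → (univ.filter (fun x : G => x ^ p ^ j = 1)) ⊆
      (univ.filter (fun x : G => x ^ p ^ i = 1)) := by
    intro j hj x hx
    simp only [mem_filter, mem_univ, true_and] at hx ⊢
    rw [← orderOf_dvd_iff_pow_eq_one] at hx ⊢
    exact hx.trans (pow_dvd_pow p hj)
  -- per element: orderOf x = 1 + ∑_{j<i} (if x^{p^j}=1 then 0 else p^{j+1}-p^j)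
  have hper : ∀ x ∈ univ.filter (fun x : G => x ^ p ^ i = 1),
      orderOf x = 1 + ∑ j ∈ range i,
        (if x ^ p ^ j = 1 then 0 else p ^ (j + 1) - p ^ j) := by
    intro x hx
    simp only [mem_filter, mem_univ, true_and] at hx
    obtain ⟨a, ha⟩ := IsPGroup.iff_orderOf.mp hG x
    have hai : a ≤ i := by
      have := orderOf_dvd_of_pow_eq_one hx
      rw [ha] at this
      exact (Nat.pow_dvd_pow_iff_le_right hp.one_lt).mp this
    have hiff : ∀ j, (x ^ p ^ j = 1) ↔ a ≤ j := by
      intro j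
      rw [← orderOf_dvd_iff_pow_eq_one, ha, Nat.pow_dvd_pow_iff_le_right hp.one_lt]
    have heq : ∑ j ∈ range i, (if x ^ p ^ j = 1 then 0 else p ^ (j + 1) - p ^ j)
        = ∑ j ∈ range i, (if a ≤ j then 0 else p ^ (j + 1) - p ^ j) := by
      refine Finset.sum_congr rfl fun j _ => ?_
      by_cases h : a ≤ j
      · simp [h, (hiff j).mpr h]
      · rw [if_neg (fun hc => h ((hiff j).mp hc)), if_neg h]
    rw [heq, ha]
    have step : ∀ b, b ≤ i →
        ∑ j ∈ range i, (if b ≤ j then 0 else p ^ (j + 1) - p ^ j) = p ^ b - 1 := by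
      intro b hb
      induction b with
      | zero => simp
      | succ b ih =>
        have hb' : b ≤ i := Nat.le_of_succ_le hb
        have split : ∀ j ∈ range i,
            (if b + 1 ≤ j then 0 else p ^ (j + 1) - p ^ j) =
            (if b ≤ j then 0 else p ^ (j + 1) - p ^ j) +
            (if j = b then p ^ (b + 1) - p ^ b else 0) := by
          intro j _
          rcases lt_trichotomy j b with h | h | h
          · simp [Nat.not_le.mpr h, Nat.not_le.mpr (Nat.lt_succ_of_lt h), Nat.ne_of_lt h]
          · subst h; simp
          · simp [Nat.le_of_lt h, Nat.succ_le_of_lt h, Nat.ne_of_gt h]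
        rw [Finset.sum_congr rfl split, Finset.sum_add_distrib, ih hb',
          Finset.sum_ite_eq' (range i) b fun _ => p ^ (b + 1) - p ^ b]
        have hbmem : b ∈ range i := mem_range.mpr (Nat.lt_of_succ_le hb)
        rw [if_pos hbmem]
        have h1 : 1 ≤ p ^ b := Nat.one_le_pow _ _ hp.pos
        have h2 : p ^ b ≤ p ^ (b + 1) := Nat.pow_le_pow_right hp.pos (Nat.le_succ _)
        omega
    rw [step a hai]
    have h1 : 1 ≤ p ^ a := Nat.one_le_pow _ _ hp.pos
    omega
  rw [Finset.sum_congr rfl hper, Finset.sum_add_distrib, Finset.sum_const, smul_eq_mul, mul_one]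
  congr 1
  rw [Finset.sum_comm]
  refine Finset.sum_congr rfl fun j hj => ?_
  rw [Finset.sum_ite, Finset.sum_const, Finset.sum_const, smul_eq_mul, mul_zero, zero_add,
    smul_eq_mul, Nat.mul_comm]
  congr 1
  have hji : j ≤ i := Nat.le_of_lt (mem_range.mp hj)
  have hset : (univ.filter fun x : G => x ^ p ^ i = 1).filter (fun x => ¬ x ^ p ^ j = 1) =
      (univ.filter fun x : G => x ^ p ^ i = 1) \ (univ.filter fun x : G => x ^ p ^ j = 1) := by
    ext x
    simp only [mem_filter, mem_sdiff, mem_univ, true_and]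
  rw [hset, Finset.card_sdiff_of_subset (hmono j hji)]

lemma psi_Omega_eq (hp : p.Prime) (hG : IsPGroup p G) (hcp : CP2 G) (i : ℕ) :
    psi (Omega p G i) =
      Nat.card (Omega p G i) +
      ∑ j ∈ Finset.range i, (p ^ (j + 1) - p ^ j) *
        (Nat.card (Omega p G i) - Nat.card (Omega p G j)) := by
  have hcardeq : ∀ j : ℕ, Nat.card (Omega p G j) =
      (Finset.univ.filter (fun x : G => x ^ p ^ j = 1)).card := by
    intro j
    rw [Nat.card_congr (Equiv.subtypeEquivRight (mem_Omega_iff hp hG hcp j)),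
      Nat.card_eq_fintype_card, Fintype.card_subtype]
  have hsum : psi (Omega p G i) =
      ∑ x ∈ Finset.univ.filter (fun x : G => x ^ p ^ i = 1), orderOf x := by
    rw [psi, finsum_eq_sum_of_fintype]
    rw [show (∑ x : ↥(Omega p G i), orderOf x) = ∑ x : ↥(Omega p G i), orderOf (x : G) from
      Finset.sum_congr rfl fun x _ => (Subgroup.orderOf_coe x).symm]
    exact (Finset.sum_subtype _ (fun x => by simp [mem_Omega_iff hp hG hcp i x])
      (fun x : G => orderOf x)).symm
  rw [hsum, sum_order_formula hp hG i, ← hcardeq i]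
  congr 1
  refine Finset.sum_congr rfl fun j _ => ?_
  rw [← hcardeq j]

end aux

theorem stmt_10 {p n : ℕ} (hp : p.Prime) (P Q : Type*) [Group P] [Finite P]
    [Group Q] [Finite Q] (hPp : IsPGroup p P) (hQp : IsPGroup p Q)
    (hcpP : CP2 P) (hcpQ : CP2 Q)
    (hcardP : Nat.card P = p ^ n) (hcardQ : Nat.card Q = p ^ n)
    (hcards : ∀ i : ℕ, Nat.card (Omega p P i) = Nat.card (Omega p Q i)) :
    ∀ i : ℕ, psi (Omega p P i) = psi (Omega p Q i) := by
  have : Fintype P := Fintype.ofFinite P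
  have : Fintype Q := Fintype.ofFinite Q
  intro i
  rw [psi_Omega_eq hp hPp hcpP i, psi_Omega_eq hp hQp hcpQ i, hcards i]
  congr 1
  exact Finset.sum_congr rfl fun j _ => by rw [hcards j]
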